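/- Let q be a positive integer, let σ₁, …, σ_q be positive reals, let c₁, …, c_q be reals not all zero, and fix an integer i ≥ 1. Define φ : (0, ∞) → ℝ by φ(α) := Σ_{j=1}^q α^{2i+1} c_j² / (σ_j² + α)^{2i+1}. Then φ is continuous and strictly increasing on (0, ∞), φ(α) → 0 as α → 0⁺, and φ(α) → Σ_{j=1}^q c_j² as α → ∞. Consequently, for every t with 0 < t < Σ_{j=1}^q c_j², there is a unique α > 0 with φ(α) = t. -/

import Mathlib

/-!
With `n = 2i + 1` the function is `φ(α) = ∑ⱼ cⱼ² (α / (σⱼ² + α))ⁿ`. For `s > 0` the ratio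
`α / (s + α)` increases strictly from `0` to `1` on `(0, ∞)`, so `φ` is continuous, strictly
increasing as soon as some `cⱼ ≠ 0`, and runs from `0` to `∑ⱼ cⱼ²`. The intermediate value theorem
gives a solution of `φ(α) = t`, and strict monotonicity makes it unique.
-/

open Filter Set Topology

theorem StrictMonoOn.existsUnique_eq_of_tendsto {α δ : Type*} [ConditionallyCompleteLinearOrder α]
    [TopologicalSpace α] [OrderTopology α] [DenselyOrdered α] [NoMaxOrder α] [LinearOrder δ]
    [TopologicalSpace δ] [OrderClosedTopology δ] {f : α → δ} {a : α} {l L t : δ}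
    (hmono : StrictMonoOn f (Ioi a)) (hf : ContinuousOn f (Ioi a))
    (hl : Tendsto f (𝓝[>] a) (𝓝 l)) (hL : Tendsto f atTop (𝓝 L)) (ht : t ∈ Ioo l L) :
    ∃! x, a < x ∧ f x = t := by
  obtain ⟨x, hx, rfl⟩ := isPreconnected_Ioi.intermediate_value_Ioo (l₁ := 𝓝[>] a) inf_le_right
    (le_principal_iff.mpr (Ioi_mem_atTop a)) hf hl hL ht
  exact ⟨x, ⟨hx, rfl⟩, fun y ⟨hy, hyx⟩ => hmono.injOn hy hx hyx⟩

theorem strictMonoOn_div_const_add {s : ℝ} (hs : 0 < s) :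
    StrictMonoOn (fun α : ℝ => α / (s + α)) (Ioi 0) := by
  intro a (ha : 0 < a) b (hb : 0 < b) hab
  rw [div_lt_div_iff₀ (by positivity) (by positivity)]
  nlinarith

theorem tendsto_div_const_add_atTop (s : ℝ) :
    Tendsto (fun α : ℝ => α / (s + α)) atTop (𝓝 1) := by
  have h : Tendsto (fun α : ℝ => (1 + s / α)⁻¹) atTop (𝓝 (1 + 0)⁻¹) :=
    (tendsto_const_nhds.add (tendsto_const_nhds.div_atTop tendsto_id)).inv₀ (by norm_num)
  rw [add_zero, inv_one] at h
  refine h.congr' ?_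
  filter_upwards [eventually_ne_atTop 0] with α hα
  field_simp
  rw [add_comm]

section RatioPowSum

variable {ι : Type*} [Fintype ι] (s c : ι → ℝ) (n : ℕ)

noncomputable def ratioPowSum (α : ℝ) : ℝ := ∑ j, c j ^ 2 * (α / (s j + α)) ^ n

theorem continuousOn_ratioPowSum (hs : ∀ j, 0 ≤ s j) :
    ContinuousOn (ratioPowSum s c n) (Ioi 0) := by
  have hden : ∀ j, ∀ α ∈ Ioi (0 : ℝ), s j + α ≠ 0 := fun j α (hα : 0 < α) =>
    (add_pos_of_nonneg_of_pos (hs j) hα).ne'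
  refine continuousOn_finsetSum _ fun j _ => ?_
  fun_prop (disch := exact hden _)

theorem tendsto_ratioPowSum_nhds_zero (hs : ∀ j, s j ≠ 0) (hn : n ≠ 0) :
    Tendsto (ratioPowSum s c n) (𝓝 0) (𝓝 0) := by
  have hcont : ContinuousAt (ratioPowSum s c n) 0 := by
    unfold ratioPowSum
    fun_prop (disch := simpa using hs _)
  simpa [ratioPowSum, zero_pow hn] using hcont.tendsto

theorem tendsto_ratioPowSum_atTop :
    Tendsto (ratioPowSum s c n) atTop (𝓝 (∑ j, c j ^ 2)) := by
  unfold ratioPowSum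
  simpa only [one_pow, mul_one] using tendsto_finsetSum Finset.univ fun j _ =>
    ((tendsto_div_const_add_atTop (s j)).pow n).const_mul (c j ^ 2)

theorem strictMonoOn_ratioPowSum (hs : ∀ j, 0 < s j) (hc : c ≠ 0) (hn : n ≠ 0) :
    StrictMonoOn (ratioPowSum s c n) (Ioi 0) := by
  intro a (ha : 0 < a) b hb hab
  have hratio_nonneg : ∀ j, 0 ≤ a / (s j + a) := fun j => by
    have := hs j
    positivity
  have hratio_lt : ∀ j, a / (s j + a) < b / (s j + b) := fun j =>
    strictMonoOn_div_const_add (hs j) ha hb hab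
  obtain ⟨j₀, hj₀⟩ := Function.ne_iff.mp hc
  refine Finset.sum_lt_sum (fun j _ => ?_) ⟨j₀, Finset.mem_univ _, ?_⟩
  · exact mul_le_mul_of_nonneg_left
      (pow_le_pow_left₀ (hratio_nonneg j) (hratio_lt j).le n) (sq_nonneg _)
  · exact mul_lt_mul_of_pos_left
      (pow_lt_pow_left₀ (hratio_lt j₀) (hratio_nonneg j₀) hn) (pow_two_pos_of_ne_zero hj₀)

end RatioPowSum

theorem scalar_parameter_function_properties_general
    {q : ℕ}
    (σ c : Fin q → ℝ) (hσ : ∀ j, 0 < σ j) (hc : c ≠ 0)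
    (i : ℕ)
    (φ : ℝ → ℝ)
    (hφ : ∀ α : ℝ, φ α = ∑ j, α ^ (2 * i + 1) * c j ^ 2 / (σ j ^ 2 + α) ^ (2 * i + 1)) :
    ContinuousOn φ (Set.Ioi (0 : ℝ)) ∧
    StrictMonoOn φ (Set.Ioi (0 : ℝ)) ∧
    Filter.Tendsto φ (nhdsWithin 0 (Set.Ioi (0 : ℝ))) (nhds 0) ∧
    Filter.Tendsto φ Filter.atTop (nhds (∑ j, c j ^ 2)) ∧
    ∀ t : ℝ, 0 < t → t < ∑ j, c j ^ 2 → ∃! α : ℝ, 0 < α ∧ φ α = t := by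
  set s : Fin q → ℝ := fun j => σ j ^ 2
  set n := 2 * i + 1
  obtain rfl : φ = ratioPowSum s c n :=
    funext fun α => (hφ α).trans <| Finset.sum_congr rfl fun j _ => by rw [div_pow]; ring
  have hs : ∀ j, 0 < s j := fun j => pow_pos (hσ j) 2
  have hn : n ≠ 0 := Nat.succ_ne_zero _
  have hcont := continuousOn_ratioPowSum s c n fun j => (hs j).le
  have hmono := strictMonoOn_ratioPowSum s c n hs hc hn
  have hzero : Tendsto (ratioPowSum s c n) (𝓝[>] 0) (𝓝 0) :=
    (tendsto_ratioPowSum_nhds_zero s c n (fun j => (hs j).ne') hn).mono_left nhdsWithin_le_nhds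
  have htop := tendsto_ratioPowSum_atTop s c n
  exact ⟨hcont, hmono, hzero, htop, fun t ht₀ ht₁ =>
    hmono.existsUnique_eq_of_tendsto hcont hzero htop ⟨ht₀, ht₁⟩⟩

/-- The scalar (diagonalized) form underlying existence and uniqueness of the solution of
the parameter selection equations (4) and (10). -/
theorem scalar_parameter_function_properties
    {q : ℕ} (hq : 0 < q)
    (σ c : Fin q → ℝ) (hσ : ∀ j, 0 < σ j) (hc : c ≠ 0)
    (i : ℕ) (hi : 1 ≤ i)
    (φ : ℝ → ℝ)
    (hφ : ∀ α : ℝ, φ α = ∑ j, α ^ (2 * i + 1) * c j ^ 2 / (σ j ^ 2 + α) ^ (2 * i + 1)) :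
    ContinuousOn φ (Set.Ioi (0 : ℝ)) ∧
    StrictMonoOn φ (Set.Ioi (0 : ℝ)) ∧
    Filter.Tendsto φ (nhdsWithin 0 (Set.Ioi (0 : ℝ))) (nhds 0) ∧
    Filter.Tendsto φ Filter.atTop (nhds (∑ j, c j ^ 2)) ∧
    ∀ t : ℝ, 0 < t → t < ∑ j, c j ^ 2 → ∃! α : ℝ, 0 < α ∧ φ α = t :=
  scalar_parameter_function_properties_general σ c hσ hc i φ hφ
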